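/- arXiv:1512.08464 — 3 statements merged into one kernel-verified Lean document; each statement's English description precedes it below -/
import Mathlib

section
/- Robustness of a contracting linear system under bounded disturbance: let f(x,t) = A x where all eigenvalues issues are avoided by assuming ⟨Ax, x⟩ ≤ −β‖x‖² for all x (β > 0). If x solves x' = A x + d(t) with ‖d(t)‖ ≤ D for all t ≥ 0, and x₀ solves x₀' = A x₀, then ‖x(t) − x₀(t)‖ ≤ ‖x(0) − x₀(0)‖ e^{−β t} + D/β for all t ≥ 0. -/
open scoped RealInnerProductSpace
open Set Filter Topology

/-!
Let `e = x - x₀`, so `e' = A e + d`. The dissipativity of `A` gives the right Dini derivative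
of `‖e‖` the bound `-β ‖e‖ + D` (at a zero of `e` the right derivative of `‖e‖` is `‖d‖`), and
Grönwall's inequality for `f' ≤ -β f + D` yields the claim.
-/

section NormRightDeriv

variable {E : Type*} [NormedAddCommGroup E] [InnerProductSpace ℝ E]

open Classical in
/-- The right derivative of `t ↦ ‖e t‖` at a point where `e = v` and `e' = v'`. -/
noncomputable def normRightDeriv (v v' : E) : ℝ :=
  if v = 0 then ‖v'‖ else ⟪v, v'⟫ / ‖v‖

theorem HasDerivWithinAt.norm_Ici_of_eq_zero {F : Type*} [NormedAddCommGroup F]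
    [NormedSpace ℝ F] {e : ℝ → F} {e' : F} {s : ℝ} (he : HasDerivWithinAt e e' (Ici s) s)
    (h0 : e s = 0) : HasDerivWithinAt (fun u => ‖e u‖) ‖e'‖ (Ici s) s := by
  rw [hasDerivWithinAt_iff_tendsto_slope, Ici_sdiff_left] at he ⊢
  refine he.norm.congr' (eventually_nhdsWithin_of_forall fun z (hz : s < z) => ?_)
  simp [slope_def_module, h0, norm_smul, abs_of_pos (sub_pos.2 hz)]

theorem HasDerivWithinAt.norm {e : ℝ → E} {e' : E} {t : Set ℝ} {s : ℝ}
    (he : HasDerivWithinAt e e' t s) (h0 : e s ≠ 0) :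
    HasDerivWithinAt (fun u => ‖e u‖) (⟪e s, e'⟫ / ‖e s‖) t s := by
  have h := he.norm_sq.sqrt (pow_ne_zero 2 (norm_ne_zero_iff.2 h0))
  simp only [Real.sqrt_sq (norm_nonneg _)] at h
  convert h using 1
  field_simp

theorem HasDerivWithinAt.norm_Ici {e : ℝ → E} {e' : E} {s : ℝ}
    (he : HasDerivWithinAt e e' (Ici s) s) :
    HasDerivWithinAt (fun u => ‖e u‖) (normRightDeriv (e s) e') (Ici s) s := by
  unfold normRightDeriv
  split_ifs with h0
  · exact he.norm_Ici_of_eq_zero h0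
  · exact he.norm h0

theorem normRightDeriv_map_add_le (A : E →ₗ[ℝ] E) {β : ℝ} {v : E}
    (hA : ⟪A v, v⟫ ≤ -β * ‖v‖ ^ 2) (w : E) :
    normRightDeriv v (A v + w) ≤ -β * ‖v‖ + ‖w‖ := by
  unfold normRightDeriv
  split_ifs with h0
  · simp [h0]
  · have hv : 0 < ‖v‖ := norm_pos_iff.2 h0
    have hw : ⟪v, w⟫ ≤ ‖w‖ * ‖v‖ := by
      simpa only [mul_comm] using real_inner_le_norm v w
    rw [div_le_iff₀ hv, inner_add_right, real_inner_comm]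
    nlinarith

end NormRightDeriv

theorem gronwallBound_le_of_neg {δ K ε : ℝ} (hK : K < 0) (hε : 0 ≤ ε) (x : ℝ) :
    gronwallBound δ K ε x ≤ δ * Real.exp (K * x) + ε / -K := by
  have hε' : 0 ≤ ε / -K := div_nonneg hε (neg_nonneg.2 hK.le)
  calc gronwallBound δ K ε x = δ * Real.exp (K * x) + ε / -K * (1 - Real.exp (K * x)) := by
        rw [gronwallBound_of_K_ne_0 hK.ne]; ring
    _ ≤ δ * Real.exp (K * x) + ε / -K := by
        gcongr
        exact mul_le_of_le_one_right hε' (by linarith [Real.exp_pos (K * x)])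

theorem robustness_bounded_disturbance_general
    {E : Type*} [NormedAddCommGroup E] [InnerProductSpace ℝ E]
    (A : E →ₗ[ℝ] E) (β : ℝ) (hβ : 0 < β)
    (hA : ∀ v : E, ⟪A v, v⟫ ≤ -β * ‖v‖ ^ 2)
    (d : ℝ → E) (D : ℝ) (hD : ∀ t, 0 ≤ t → ‖d t‖ ≤ D)
    (x x₀ : ℝ → E)
    (hx : ∀ t, HasDerivAt x (A (x t) + d t) t)
    (hx₀ : ∀ t, HasDerivAt x₀ (A (x₀ t)) t) :
    ∀ t, 0 ≤ t →
      ‖x t - x₀ t‖ ≤ ‖x 0 - x₀ 0‖ * Real.exp (-β * t) + D / β := by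
  intro t ht
  have he : ∀ s, HasDerivAt (fun u => x u - x₀ u) (A (x s - x₀ s) + d s) s := fun s => by
    convert (hx s).sub (hx₀ s) using 1
    · rfl
    · rw [map_sub]; abel
  have hgronwall := le_gronwallBound_of_liminf_deriv_right_le (a := 0) (b := t)
    (f := fun s => ‖x s - x₀ s‖)
    (f' := fun s => normRightDeriv (x s - x₀ s) (A (x s - x₀ s) + d s))
    (fun s _ => (he s).continuousAt.norm.continuousWithinAt)
    (fun s _ _ hr => (he s).hasDerivWithinAt.norm_Ici.liminf_right_slope_le hr) le_rfl
    (fun s hs => (normRightDeriv_map_add_le A (hA _) _).trans (by gcongr; exact hD s hs.1))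
    t (right_mem_Icc.2 ht)
  have hD0 : 0 ≤ D := (norm_nonneg _).trans (hD 0 le_rfl)
  simpa using hgronwall.trans (gronwallBound_le_of_neg (neg_lt_zero.2 hβ) hD0 _)

theorem robustness_bounded_disturbance
    {E : Type*} [NormedAddCommGroup E] [InnerProductSpace ℝ E] [FiniteDimensional ℝ E]
    (A : E →ₗ[ℝ] E) (β : ℝ) (hβ : 0 < β)
    (hA : ∀ v : E, ⟪A v, v⟫ ≤ -β * ‖v‖ ^ 2)
    (d : ℝ → E) (hd : Continuous d) (D : ℝ) (hD : ∀ t, 0 ≤ t → ‖d t‖ ≤ D)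
    (x x₀ : ℝ → E)
    (hx : ∀ t, HasDerivAt x (A (x t) + d t) t)
    (hx₀ : ∀ t, HasDerivAt x₀ (A (x₀ t)) t) :
    ∀ t, 0 ≤ t →
      ‖x t - x₀ t‖ ≤ ‖x 0 - x₀ 0‖ * Real.exp (-β * t) + D / β :=
  robustness_bounded_disturbance_general A β hβ hA d D hD x x₀ hx hx₀
end

section
/- Robustness with finite-gain L-stable disturbance in an inner product space: let ⟨A v, v⟩ ≤ −β ‖v‖² for all v with β > 0, let d : E × ℝ → E satisfy ‖d(x,t)‖ ≤ K₀ + K_x ‖x‖ with 0 ≤ K_x < β, let x₀ solve x₀' = A x₀ with ‖x₀(t)‖ ≤ M for all t ≥ 0, and let x solve x' = A x + d(x(t), t). Then ‖x(t) − x₀(t)‖ ≤ ‖x(0) − x₀(0)‖ e^{−(β − K_x)t} + (K₀ + K_x M)/(β − K_x) for all t ≥ 0. -/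
/-!
The deviation `e = x - x₀` solves `e' = A e + d(x, t)`, and on `t ≥ 0` the growth bound on `d`
together with `‖x‖ ≤ ‖e‖ + M` gives `‖d(x, t)‖ ≤ (K₀ + Kx M) + Kx ‖e‖`. Combined with the
dissipativity of `A`, the upper right Dini derivative of `‖e‖` (which need not be differentiable
where `e` vanishes) is at most `-(β - Kx) ‖e‖ + (K₀ + Kx M)`, and Grönwall's comparison with a
negative rate yields the bound.
-/

open scoped RealInnerProductSpace Topology
open Filter Set Real

section NormDeriv

variable {F : Type*} [NormedAddCommGroup F] [InnerProductSpace ℝ F] {f : ℝ → F} {f' : F} {t : ℝ}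

theorem HasDerivAt.hasDerivAt_norm (hf : HasDerivAt f f' t) (h0 : f t ≠ 0) :
    HasDerivAt (‖f ·‖) (⟪f t, f'⟫ / ‖f t‖) t := by
  have h := hf.norm_sq.sqrt (by positivity)
  simp only [Real.sqrt_sq (norm_nonneg _)] at h
  convert h using 1
  field_simp

theorem HasDerivAt.hasDerivWithinAt_norm_Ici_of_eq_zero (hf : HasDerivAt f f' t) (h0 : f t = 0) :
    HasDerivWithinAt (‖f ·‖) ‖f'‖ (Ici t) t := by
  rw [← hasDerivWithinAt_Ioi_iff_Ici, hasDerivWithinAt_iff_tendsto_slope' self_notMem_Ioi]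
  refine (hf.tendsto_slope.norm.mono_left (nhdsWithin_mono _ fun z hz => ne_of_gt hz)).congr' ?_
  filter_upwards [self_mem_nhdsWithin] with z (hz : t < z)
  rw [slope_def_module, slope_def_module, h0, sub_zero, norm_zero, sub_zero, norm_smul,
    Real.norm_eq_abs, abs_of_pos (inv_pos.2 (sub_pos.2 hz)), smul_eq_mul]

theorem HasDerivAt.frequently_slope_norm_lt {b r : ℝ} (hf : HasDerivAt f f' t)
    (hinner : ⟪f t, f'⟫ ≤ ‖f t‖ * b) (hzero : f t = 0 → ‖f'‖ ≤ b) (hr : b < r) :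
    ∃ᶠ z in 𝓝[>] t, slope (‖f ·‖) t z < r := by
  by_cases h0 : f t = 0
  · exact (hf.hasDerivWithinAt_norm_Ici_of_eq_zero h0).liminf_right_slope_le
      ((hzero h0).trans_lt hr)
  · refine (hf.hasDerivAt_norm h0).hasDerivWithinAt.liminf_right_slope_le ?_
    have hpos : 0 < ‖f t‖ := norm_pos_iff.2 h0
    exact ((div_le_iff₀ hpos).2 (by rwa [mul_comm])).trans_lt hr

end NormDeriv

theorem gronwallBound_neg_le {δ a c : ℝ} (ha : 0 < a) (hc : 0 ≤ c) (T : ℝ) :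
    gronwallBound δ (-a) c T ≤ δ * exp (-a * T) + c / a := by
  have hexp : 0 ≤ c / a * exp (-a * T) := by positivity
  rw [gronwallBound_of_K_ne_0 (neg_ne_zero.2 ha.ne'), div_neg]
  linarith

theorem norm_le_exp_mul_add_of_inner_deriv_le {F : Type*} [NormedAddCommGroup F]
    [InnerProductSpace ℝ F] {e e' : ℝ → F} {a c T : ℝ} (ha : 0 < a) (hc : 0 ≤ c) (hT : 0 ≤ T)
    (he : ∀ s, HasDerivAt e (e' s) s)
    (hinner : ∀ s ∈ Ico 0 T, ⟪e s, e' s⟫ ≤ ‖e s‖ * (-a * ‖e s‖ + c))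
    (hzero : ∀ s ∈ Ico 0 T, e s = 0 → ‖e' s‖ ≤ c) :
    ‖e T‖ ≤ ‖e 0‖ * exp (-a * T) + c / a := by
  have hcont : ContinuousOn (‖e ·‖) (Icc 0 T) :=
    (continuous_iff_continuousAt.2 fun s => (he s).continuousAt).norm.continuousOn
  have h := le_gronwallBound_of_liminf_deriv_right_le (f' := fun s => -a * ‖e s‖ + c) hcont
    (fun s hs _ hr => (he s).frequently_slope_norm_lt (hinner s hs)
      (fun h0 => by simpa [h0] using hzero s hs h0) hr)
    le_rfl (fun _ _ => le_rfl) T ⟨hT, le_rfl⟩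
  rw [sub_zero] at h
  exact h.trans (gronwallBound_neg_le ha hc T)

theorem inner_add_le_of_inner_map_le {E : Type*} [NormedAddCommGroup E] [InnerProductSpace ℝ E]
    {A : E →ₗ[ℝ] E} {β Kx c : ℝ} (hA : ∀ v : E, ⟪A v, v⟫ ≤ -β * ‖v‖ ^ 2) {v g : E}
    (hg : ‖g‖ ≤ c + Kx * ‖v‖) :
    ⟪v, A v + g⟫ ≤ ‖v‖ * (-(β - Kx) * ‖v‖ + c) := by
  rw [inner_add_right, real_inner_comm]
  nlinarith [hA v, real_inner_le_norm v g, mul_le_mul_of_nonneg_left hg (norm_nonneg v)]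

theorem robustness_finite_gain_disturbance_general
    {E : Type*} [NormedAddCommGroup E] [InnerProductSpace ℝ E]
    (A : E →ₗ[ℝ] E) (β Kx K₀ M : ℝ)
    (hKx : 0 ≤ Kx) (hKxβ : Kx < β) (hK₀ : 0 ≤ K₀) (hM : 0 ≤ M)
    (hA : ∀ v : E, ⟪A v, v⟫ ≤ -β * ‖v‖ ^ 2)
    (d : E → ℝ → E) (hd : ∀ v t, ‖d v t‖ ≤ K₀ + Kx * ‖v‖)
    (x x₀ : ℝ → E)
    (hx : ∀ t, HasDerivAt x (A (x t) + d (x t) t) t)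
    (hx₀ : ∀ t, HasDerivAt x₀ (A (x₀ t)) t)
    (hx₀bdd : ∀ t, 0 ≤ t → ‖x₀ t‖ ≤ M) :
    ∀ t, 0 ≤ t →
      ‖x t - x₀ t‖ ≤ ‖x 0 - x₀ 0‖ * Real.exp (-(β - Kx) * t)
        + (K₀ + Kx * M) / (β - Kx) := by
  intro t ht
  have he : ∀ s, HasDerivAt (fun s => x s - x₀ s) (A (x s - x₀ s) + d (x s) s) s := fun s =>
    ((hx s).sub (hx₀ s)).congr_deriv (by rw [map_sub]; abel)
  have hdist : ∀ s ∈ Ico 0 t, ‖d (x s) s‖ ≤ K₀ + Kx * M + Kx * ‖x s - x₀ s‖ := fun s hs => by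
    nlinarith [hd (x s) s, hx₀bdd s hs.1, norm_le_norm_add_norm_sub' (x s) (x₀ s)]
  refine norm_le_exp_mul_add_of_inner_deriv_le (sub_pos.2 hKxβ) (by positivity) ht he
    (fun s hs => inner_add_le_of_inner_map_le hA (hdist s hs)) fun s hs h0 => ?_
  simpa [h0] using hdist s hs

theorem robustness_finite_gain_disturbance
    {E : Type*} [NormedAddCommGroup E] [InnerProductSpace ℝ E] [FiniteDimensional ℝ E]
    (A : E →ₗ[ℝ] E) (β Kx K₀ M : ℝ)
    (hβ : 0 < β) (hKx : 0 ≤ Kx) (hKxβ : Kx < β) (hK₀ : 0 ≤ K₀) (hM : 0 ≤ M)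
    (hA : ∀ v : E, ⟪A v, v⟫ ≤ -β * ‖v‖ ^ 2)
    (d : E → ℝ → E) (hd : ∀ v t, ‖d v t‖ ≤ K₀ + Kx * ‖v‖)
    (x x₀ : ℝ → E)
    (hx : ∀ t, HasDerivAt x (A (x t) + d (x t) t) t)
    (hx₀ : ∀ t, HasDerivAt x₀ (A (x₀ t)) t)
    (hx₀bdd : ∀ t, 0 ≤ t → ‖x₀ t‖ ≤ M) :
    ∀ t, 0 ≤ t →
      ‖x t - x₀ t‖ ≤ ‖x 0 - x₀ 0‖ * Real.exp (-(β - Kx) * t)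
        + (K₀ + Kx * M) / (β - Kx) :=
  robustness_finite_gain_disturbance_general A β Kx K₀ M hKx hKxβ hK₀ hM hA d hd x x₀ hx hx₀ hx₀bdd
end

section
/- Passivity implies Lyapunov decrease for the four-room system: if f, g1, g2 are passive (x·f(x) > 0 for x ≠ 0) and ε ≥ 0, then V = (x11² + x12² + x21² + x22²)/2 is nonincreasing along solutions of the four-room system, and strictly decreasing unless x12 = x11, x22 = x21, and (if ε > 0) x21 = x11, x22 = x12. -/
def Passive (φ : ℝ → ℝ) : Prop :=
  ∀ s : ℝ, s ≠ 0 → 0 < s * φ s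

namespace Passive

variable {φ : ℝ → ℝ}

theorem mul_apply_nonneg (hφ : Passive φ) (s : ℝ) : 0 ≤ s * φ s := by
  rcases eq_or_ne s 0 with rfl | hs
  · simp
  · exact (hφ s hs).le

theorem sub_mul_apply_sub_pos (hφ : Passive φ) {a b : ℝ} (h : a ≠ b) :
    0 < (a - b) * φ (a - b) :=
  hφ _ (sub_ne_zero.mpr h)

end Passive

/-- Each coupling moves its flux out of one room and into the other, so it contributes
`-(difference) * (flux)` to the derivative of the energy. -/
theorem hasDerivAt_fourRoom_energy (f g1 g2 : ℝ → ℝ) (ε : ℝ) {x11 x12 x21 x22 : ℝ → ℝ} {t : ℝ}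
    (h11 : HasDerivAt x11 (f (x12 t - x11 t) + ε * g1 (x21 t - x11 t)) t)
    (h12 : HasDerivAt x12 (-f (x12 t - x11 t) + ε * g2 (x22 t - x12 t)) t)
    (h21 : HasDerivAt x21 (f (x22 t - x21 t) - ε * g1 (x21 t - x11 t)) t)
    (h22 : HasDerivAt x22 (-f (x22 t - x21 t) - ε * g2 (x22 t - x12 t)) t) :
    HasDerivAt (fun s => (x11 s ^ 2 + x12 s ^ 2 + x21 s ^ 2 + x22 s ^ 2) / 2)
      (-(x12 t - x11 t) * f (x12 t - x11 t) - (x22 t - x21 t) * f (x22 t - x21 t)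
        - ε * (x21 t - x11 t) * g1 (x21 t - x11 t)
        - ε * (x22 t - x12 t) * g2 (x22 t - x12 t)) t :=
  (((((h11.fun_pow 2).fun_add (h12.fun_pow 2)).fun_add (h21.fun_pow 2)).fun_add
    (h22.fun_pow 2)).div_const 2).congr_deriv (by ring)

theorem passivity_lyapunov_decrease_general
    (f g1 g2 : ℝ → ℝ)
    (hfpass : ∀ s : ℝ, s ≠ 0 → 0 < s * f s)
    (hg1pass : ∀ s : ℝ, s ≠ 0 → 0 < s * g1 s)
    (hg2pass : ∀ s : ℝ, s ≠ 0 → 0 < s * g2 s)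
    (ε : ℝ) (hε : 0 ≤ ε) (x11 x12 x21 x22 : ℝ → ℝ)
    (h11 : ∀ t, HasDerivAt x11 (f (x12 t - x11 t) + ε * g1 (x21 t - x11 t)) t)
    (h12 : ∀ t, HasDerivAt x12 (-f (x12 t - x11 t) + ε * g2 (x22 t - x12 t)) t)
    (h21 : ∀ t, HasDerivAt x21 (f (x22 t - x21 t) - ε * g1 (x21 t - x11 t)) t)
    (h22 : ∀ t, HasDerivAt x22 (-f (x22 t - x21 t) - ε * g2 (x22 t - x12 t)) t) :
    ∀ t, HasDerivAt (fun s => (x11 s ^ 2 + x12 s ^ 2 + x21 s ^ 2 + x22 s ^ 2) / 2)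
        (-(x12 t - x11 t) * f (x12 t - x11 t) - (x22 t - x21 t) * f (x22 t - x21 t)
          - ε * (x21 t - x11 t) * g1 (x21 t - x11 t)
          - ε * (x22 t - x12 t) * g2 (x22 t - x12 t)) t ∧
      (-(x12 t - x11 t) * f (x12 t - x11 t) - (x22 t - x21 t) * f (x22 t - x21 t)
          - ε * (x21 t - x11 t) * g1 (x21 t - x11 t)
          - ε * (x22 t - x12 t) * g2 (x22 t - x12 t)) ≤ 0 ∧
      ((x12 t ≠ x11 t ∨ x22 t ≠ x21 t ∨
          (0 < ε ∧ (x21 t ≠ x11 t ∨ x22 t ≠ x12 t))) →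
        (-(x12 t - x11 t) * f (x12 t - x11 t) - (x22 t - x21 t) * f (x22 t - x21 t)
          - ε * (x21 t - x11 t) * g1 (x21 t - x11 t)
          - ε * (x22 t - x12 t) * g2 (x22 t - x12 t)) < 0) := by
  intro t
  have hf : Passive f := hfpass
  have hg1 : Passive g1 := hg1pass
  have hg2 : Passive g2 := hg2pass
  have hA := hf.mul_apply_nonneg (x12 t - x11 t)
  have hB := hf.mul_apply_nonneg (x22 t - x21 t)
  have hC := mul_nonneg hε (hg1.mul_apply_nonneg (x21 t - x11 t))
  have hD := mul_nonneg hε (hg2.mul_apply_nonneg (x22 t - x12 t))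
  refine ⟨hasDerivAt_fourRoom_energy f g1 g2 ε (h11 t) (h12 t) (h21 t) (h22 t), ?_, ?_⟩
  · linarith
  · rintro (h | h | ⟨hε', h | h⟩)
    · linarith [hf.sub_mul_apply_sub_pos h]
    · linarith [hf.sub_mul_apply_sub_pos h]
    · linarith [mul_pos hε' (hg1.sub_mul_apply_sub_pos h)]
    · linarith [mul_pos hε' (hg2.sub_mul_apply_sub_pos h)]

theorem passivity_lyapunov_decrease
    (f g1 g2 : ℝ → ℝ) (hf : Continuous f) (hg1 : Continuous g1) (hg2 : Continuous g2)
    (hfpass : ∀ s : ℝ, s ≠ 0 → 0 < s * f s)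
    (hg1pass : ∀ s : ℝ, s ≠ 0 → 0 < s * g1 s)
    (hg2pass : ∀ s : ℝ, s ≠ 0 → 0 < s * g2 s)
    (hf0 : ∀ s : ℝ, 0 ≤ s * f s) (hg10 : ∀ s : ℝ, 0 ≤ s * g1 s)
    (hg20 : ∀ s : ℝ, 0 ≤ s * g2 s)
    (ε : ℝ) (hε : 0 ≤ ε) (x11 x12 x21 x22 : ℝ → ℝ)
    (h11 : ∀ t, HasDerivAt x11 (f (x12 t - x11 t) + ε * g1 (x21 t - x11 t)) t)
    (h12 : ∀ t, HasDerivAt x12 (-f (x12 t - x11 t) + ε * g2 (x22 t - x12 t)) t)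
    (h21 : ∀ t, HasDerivAt x21 (f (x22 t - x21 t) - ε * g1 (x21 t - x11 t)) t)
    (h22 : ∀ t, HasDerivAt x22 (-f (x22 t - x21 t) - ε * g2 (x22 t - x12 t)) t) :
    ∀ t, HasDerivAt (fun s => (x11 s ^ 2 + x12 s ^ 2 + x21 s ^ 2 + x22 s ^ 2) / 2)
        (-(x12 t - x11 t) * f (x12 t - x11 t) - (x22 t - x21 t) * f (x22 t - x21 t)
          - ε * (x21 t - x11 t) * g1 (x21 t - x11 t)
          - ε * (x22 t - x12 t) * g2 (x22 t - x12 t)) t ∧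
      (-(x12 t - x11 t) * f (x12 t - x11 t) - (x22 t - x21 t) * f (x22 t - x21 t)
          - ε * (x21 t - x11 t) * g1 (x21 t - x11 t)
          - ε * (x22 t - x12 t) * g2 (x22 t - x12 t)) ≤ 0 ∧
      ((x12 t ≠ x11 t ∨ x22 t ≠ x21 t ∨
          (0 < ε ∧ (x21 t ≠ x11 t ∨ x22 t ≠ x12 t))) →
        (-(x12 t - x11 t) * f (x12 t - x11 t) - (x22 t - x21 t) * f (x22 t - x21 t)
          - ε * (x21 t - x11 t) * g1 (x21 t - x11 t)
          - ε * (x22 t - x12 t) * g2 (x22 t - x12 t)) < 0) :=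
  passivity_lyapunov_decrease_general f g1 g2 hfpass hg1pass hg2pass ε hε x11 x12 x21 x22 h11 h12
    h21 h22
end
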